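/- Let 0<q₁<1 and 0<q₂<1, let β,δ>0, μ,ν>0 and η,ζ>−1 be real parameters, let f,g,h : [0,∞)→ℝ be continuous functions such that f and g are asynchronous on [0,∞) and h is nonnegative, and let u,v : [0,∞)→[0,∞) be continuous. Then the inequality of Theorem 2 is reversed; that is, for all t>0: I_{q₂}^{ζ,ν,δ}{v·f·g·h}(t)·I_{q₁}^{η,μ,β}{u}(t) + I_{q₂}^{ζ,ν,δ}{v·f·g}(t)·I_{q₁}^{η,μ,β}{u·h}(t) + I_{q₂}^{ζ,ν,δ}{v·h}(t)·I_{q₁}^{η,μ,β}{u·f·g}(t) + I_{q₂}^{ζ,ν,δ}{v}(t)·I_{q₁}^{η,μ,β}{u·f·g·h}(t) ≤ I_{q₂}^{ζ,ν,δ}{v·g·h}(t)·I_{q₁}^{η,μ,β}{u·f}(t) + I_{q₂}^{ζ,ν,δ}{v·f·h}(t)·I_{q₁}^{η,μ,β}{u·g}(t) + I_{q₂}^{ζ,ν,δ}{v·f}(t)·I_{q₁}^{η,μ,β}{u·g·h}(t) + I_{q₂}^{ζ,ν,δ}{v·g}(t)·I_{q₁}^{η,μ,β}{u·f·h}(t).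 -/
import Mathlib


open scoped BigOperators

/-- The q-shifted factorial (a;q)_k = prod_{j<k} (1 - a q^j). -/
noncomputable def qPoch (q a : ℝ) (k : ℕ) : ℝ :=
  ∏ j ∈ Finset.range k, (1 - a * q ^ j)

/-- Generalized Erdélyi–Kober fractional q-integral
    I_q^{η,μ,β}{f}(t) = β(1-q^{1/β})(1-q)^{μ-1} ∑_k ((q^μ;q)_k/(q;q)_k) q^{k(η+1)} f(t q^{k/β}). -/
noncomputable def EK (q η μ β : ℝ) (f : ℝ → ℝ) (t : ℝ) : ℝ :=
  β * (1 - q ^ (1 / β)) * (1 - q) ^ (μ - 1) *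
    ∑' k : ℕ, qPoch q (q ^ μ) k / qPoch q q k * q ^ ((k : ℝ) * (η + 1)) * f (t * q ^ ((k : ℝ) / β))

def Synchronous (f g : ℝ → ℝ) : Prop :=
  ∀ x y : ℝ, 0 ≤ x → 0 ≤ y → 0 ≤ (f x - f y) * (g x - g y)

def Asynchronous (f g : ℝ → ℝ) : Prop :=
  ∀ x y : ℝ, 0 ≤ x → 0 ≤ y → (f x - f y) * (g x - g y) ≤ 0


lemma qPoch_pos (q a : ℝ) (hq0 : 0 < q) (hq1 : q < 1) (ha0 : 0 < a) (ha1 : a < 1) (k : ℕ) :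
    0 < qPoch q a k := by
  apply Finset.prod_pos
  intro j _
  have h1 : q ^ j ≤ 1 := pow_le_one₀ hq0.le hq1.le
  have h2 : 0 < q ^ j := pow_pos hq0 j
  nlinarith

lemma qPoch_le_one (q a : ℝ) (hq0 : 0 < q) (hq1 : q < 1) (ha0 : 0 < a) (ha1 : a < 1) (k : ℕ) :
    qPoch q a k ≤ 1 := by
  apply Finset.prod_le_one
  · intro j _
    have h2 : 0 < q ^ j := pow_pos hq0 j
    have h1 : q ^ j ≤ 1 := pow_le_one₀ hq0.le hq1.le
    nlinarith
  · intro j _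
    have h2 : 0 < q ^ j := pow_pos hq0 j
    nlinarith

lemma weight_pos (q μ η : ℝ) (hq : 0 < q) (hq' : q < 1) (hμ : 0 < μ) (k : ℕ) :
    0 < qPoch q (q ^ μ) k / qPoch q q k * q ^ ((k:ℝ)*(η+1)) := by
  have hqm0 : 0 < q ^ μ := Real.rpow_pos_of_pos hq μ
  have hqm1 : q ^ μ < 1 := Real.rpow_lt_one hq.le hq' hμ
  exact mul_pos (div_pos (qPoch_pos q _ hq hq' hqm0 hqm1 k) (qPoch_pos q q hq hq' hq hq' k))
    (Real.rpow_pos_of_pos hq _)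

lemma weight_summable (q μ η : ℝ) (hq : 0 < q) (hq' : q < 1) (hμ : 0 < μ) (hη : -1 < η) :
    Summable (fun k : ℕ => qPoch q (q ^ μ) k / qPoch q q k * q ^ ((k:ℝ)*(η+1))) := by
  set w : ℕ → ℝ := fun k => qPoch q (q ^ μ) k / qPoch q q k * q ^ ((k:ℝ)*(η+1)) with hw
  have hqe : 0 < q ^ (η+1) := Real.rpow_pos_of_pos hq _
  have hqe1 : q ^ (η+1) < 1 := Real.rpow_lt_one hq.le hq' (by linarith)
  set r : ℝ := (1 + q ^ (η+1))/2 with hr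
  have hr1 : r < 1 := by rw [hr]; linarith
  have hr0 : 0 < r := by rw [hr]; linarith
  apply summable_of_ratio_norm_eventually_le hr1
  have hqm0 : 0 < q ^ μ := Real.rpow_pos_of_pos hq μ
  have hqm1 : q ^ μ < 1 := Real.rpow_lt_one hq.le hq' hμ
  have htend : Filter.Tendsto (fun k : ℕ => (q:ℝ) ^ k) Filter.atTop (nhds 0) :=
    tendsto_pow_atTop_nhds_zero_of_lt_one hq.le hq'
  have hc : 0 < (1 - q ^ (η+1))/2 := by linarith
  have hev : ∀ᶠ k : ℕ in Filter.atTop, r * (q * q ^ k) ≤ (1 - q ^ (η+1))/2 := by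
    have := htend.eventually (eventually_le_nhds (show (0:ℝ) < ((1 - q ^ (η+1))/2)/(r*q) from
      div_pos hc (mul_pos hr0 hq)))
    filter_upwards [this] with k hk
    rw [le_div_iff₀ (mul_pos hr0 hq)] at hk
    nlinarith
  filter_upwards [hev] with k hk
  have hwpos : ∀ j : ℕ, 0 < w j := fun j => weight_pos q μ η hq hq' hμ j
  have hsucc : w (k+1) = w k * ((1 - q ^ μ * q ^ k)/(1 - q * q ^ k) * q ^ (η+1)) := by
    rw [hw]
    simp only [qPoch, Finset.prod_range_succ]
    have hq2 : (q:ℝ) ^ ((((k:ℕ)+1:ℕ):ℝ)*(η+1)) = q ^ ((k:ℝ)*(η+1)) * q ^ (η+1) := by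
      rw [← Real.rpow_add hq]; push_cast; ring_nf
    push_cast at hq2 ⊢
    rw [hq2]
    have hd : (0:ℝ) < 1 - q * q ^ k := by
      have : q * q ^ k ≤ q := by nlinarith [pow_le_one₀ hq.le hq'.le (n := k), pow_pos hq k]
      linarith
    field_simp
  have hk0 : 0 < q ^ k := pow_pos hq k
  have hd : (0:ℝ) < 1 - q * q ^ k := by
    have : q * q ^ k ≤ q := by nlinarith [pow_le_one₀ hq.le hq'.le (n := k)]
    linarith
  rw [Real.norm_eq_abs, Real.norm_eq_abs, abs_of_pos (hwpos _), abs_of_pos (hwpos _), hsucc]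
  have hratio : (1 - q ^ μ * q ^ k)/(1 - q * q ^ k) * q ^ (η+1) ≤ r := by
    rw [div_mul_eq_mul_div, div_le_iff₀ hd]
    have h1 : 0 ≤ q ^ μ * q ^ k := by positivity
    nlinarith
  calc w k * ((1 - q ^ μ * q ^ k)/(1 - q * q ^ k) * q ^ (η+1)) ≤ w k * r :=
        mul_le_mul_of_nonneg_left hratio (hwpos k).le
    _ = r * w k := mul_comm _ _

lemma point_mem (q β t : ℝ) (hq : 0 < q) (hq' : q < 1) (hβ : 0 < β) (ht : 0 < t) (k : ℕ) :
    t * q ^ ((k:ℝ)/β) ∈ Set.Icc 0 t := by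
  have h1 : 0 < q ^ ((k:ℝ)/β) := Real.rpow_pos_of_pos hq _
  have h2 : q ^ ((k:ℝ)/β) ≤ 1 :=
    Real.rpow_le_one hq.le hq'.le (div_nonneg (Nat.cast_nonneg k) hβ.le)
  constructor
  · positivity
  · nlinarith

lemma EK_summable (q μ η β t : ℝ) (hq : 0 < q) (hq' : q < 1) (hμ : 0 < μ) (hη : -1 < η)
    (hβ : 0 < β) (ht : 0 < t) (φ : ℝ → ℝ) (hφ : ContinuousOn φ (Set.Ici 0)) :
    Summable (fun k : ℕ =>
      qPoch q (q ^ μ) k / qPoch q q k * q ^ ((k:ℝ)*(η+1)) * φ (t * q ^ ((k:ℝ)/β))) := by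
  have hφ' : ContinuousOn φ (Set.Icc 0 t) :=
    hφ.mono (fun s hs => hs.1)
  obtain ⟨M, hM⟩ := (isCompact_Icc).exists_bound_of_continuousOn hφ'
  apply Summable.of_abs
  refine Summable.of_nonneg_of_le (fun k => abs_nonneg _) (fun k => ?_)
    ((weight_summable q μ η hq hq' hμ hη).mul_right M)
  rw [abs_mul]
  have hw := weight_pos q μ η hq hq' hμ k
  rw [abs_of_pos hw]
  exact mul_le_mul_of_nonneg_left (hM _ (point_mem q β t hq hq' hβ ht k)) hw.le


lemma cheb_core (a b F G H F' G' H' : ℕ → ℝ)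
    (ha : ∀ k, 0 ≤ a k) (hb : ∀ m, 0 ≤ b m)
    (hH : ∀ k, 0 ≤ H k) (hH' : ∀ m, 0 ≤ H' m)
    (hsync : ∀ k m, (F k - F' m) * (G k - G' m) ≤ 0)
    (sA : Summable a)
    (sF : Summable (fun k => a k * F k))
    (sG : Summable (fun k => a k * G k))
    (sH : Summable (fun k => a k * H k))
    (sFG : Summable (fun k => a k * (F k * G k)))
    (sFH : Summable (fun k => a k * (F k * H k)))
    (sGH : Summable (fun k => a k * (G k * H k)))
    (sFGH : Summable (fun k => a k * (F k * G k * H k)))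
    (tB : Summable b)
    (tF : Summable (fun m => b m * F' m))
    (tG : Summable (fun m => b m * G' m))
    (tH : Summable (fun m => b m * H' m))
    (tFG : Summable (fun m => b m * (F' m * G' m)))
    (tFH : Summable (fun m => b m * (F' m * H' m)))
    (tGH : Summable (fun m => b m * (G' m * H' m)))
    (tFGH : Summable (fun m => b m * (F' m * G' m * H' m))) :
    (∑' m, b m * (F' m * G' m * H' m)) * (∑' k, a k) +
      (∑' m, b m * (F' m * G' m)) * (∑' k, a k * H k) +
      (∑' m, b m * H' m) * (∑' k, a k * (F k * G k)) +
      (∑' m, b m) * (∑' k, a k * (F k * G k * H k)) ≤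
    (∑' m, b m * (G' m * H' m)) * (∑' k, a k * F k) +
      (∑' m, b m * (F' m * H' m)) * (∑' k, a k * G k) +
      (∑' m, b m * F' m) * (∑' k, a k * (G k * H k)) +
      (∑' m, b m * G' m) * (∑' k, a k * (F k * H k)) := by
  set SA := ∑' k, a k with hSA
  set SF := ∑' k, a k * F k with hSF
  set SG := ∑' k, a k * G k with hSG
  set SH := ∑' k, a k * H k with hSH
  set SFG := ∑' k, a k * (F k * G k) with hSFG
  set SFH := ∑' k, a k * (F k * H k) with hSFH
  set SGH := ∑' k, a k * (G k * H k) with hSGH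
  set SFGH := ∑' k, a k * (F k * G k * H k) with hSFGH
  set TB := ∑' m, b m with hTB
  set TF := ∑' m, b m * F' m with hTF
  set TG := ∑' m, b m * G' m with hTG
  set TH := ∑' m, b m * H' m with hTH
  set TFG := ∑' m, b m * (F' m * G' m) with hTFG
  set TFH := ∑' m, b m * (F' m * H' m) with hTFH
  set TGH := ∑' m, b m * (G' m * H' m) with hTGH
  set TFGH := ∑' m, b m * (F' m * G' m * H' m) with hTFGH
  have hInner : ∀ m : ℕ, HasSum
      (fun k => a k * ((F k - F' m) * (G k - G' m) * (H k + H' m)))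
      (SFGH + SFG * H' m - SFH * G' m - SF * (G' m * H' m)
        - SGH * F' m - SG * (F' m * H' m) + SH * (F' m * G' m) + SA * (F' m * G' m * H' m)) := by
    intro m
    have h := (((((((sFGH.hasSum.add (sFG.hasSum.mul_right (H' m))).sub
        (sFH.hasSum.mul_right (G' m))).sub (sF.hasSum.mul_right (G' m * H' m))).sub
        (sGH.hasSum.mul_right (F' m))).sub (sG.hasSum.mul_right (F' m * H' m))).add
        (sH.hasSum.mul_right (F' m * G' m))).add (sA.hasSum.mul_right (F' m * G' m * H' m)))
    have hfun : (fun k => a k * ((F k - F' m) * (G k - G' m) * (H k + H' m))) =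
        (fun k => a k * (F k * G k * H k) + a k * (F k * G k) * H' m
          - a k * (F k * H k) * G' m - a k * F k * (G' m * H' m)
          - a k * (G k * H k) * F' m - a k * G k * (F' m * H' m)
          + a k * H k * (F' m * G' m) + a k * (F' m * G' m * H' m)) := by
      funext k; ring
    rw [hfun]
    exact h
  have hneg : ∀ m : ℕ,
      SFGH + SFG * H' m - SFH * G' m - SF * (G' m * H' m)
        - SGH * F' m - SG * (F' m * H' m) + SH * (F' m * G' m) + SA * (F' m * G' m * H' m) ≤ 0 := by
    intro m
    rw [← (hInner m).tsum_eq]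
    apply tsum_nonpos
    intro k
    have h1 := hsync k m
    have h2 : 0 ≤ H k + H' m := add_nonneg (hH k) (hH' m)
    have h3 : (F k - F' m) * (G k - G' m) * (H k + H' m) ≤ 0 :=
      mul_nonpos_of_nonpos_of_nonneg h1 h2
    exact mul_nonpos_of_nonneg_of_nonpos (ha k) h3
  have hOuter : HasSum
      (fun m => b m *
        (SFGH + SFG * H' m - SFH * G' m - SF * (G' m * H' m)
          - SGH * F' m - SG * (F' m * H' m) + SH * (F' m * G' m) + SA * (F' m * G' m * H' m)))
      (TB * SFGH + TH * SFG - TG * SFH - TGH * SF - TF * SGH - TFH * SG + TFG * SH + TFGH * SA) := by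
    have h := (((((((tB.hasSum.mul_right SFGH).add (tH.hasSum.mul_right SFG)).sub
        (tG.hasSum.mul_right SFH)).sub (tGH.hasSum.mul_right SF)).sub
        (tF.hasSum.mul_right SGH)).sub (tFH.hasSum.mul_right SG)).add
        (tFG.hasSum.mul_right SH)).add (tFGH.hasSum.mul_right SA)
    have hfun : (fun m => b m *
        (SFGH + SFG * H' m - SFH * G' m - SF * (G' m * H' m)
          - SGH * F' m - SG * (F' m * H' m) + SH * (F' m * G' m) + SA * (F' m * G' m * H' m))) =
        (fun m => b m * SFGH + b m * H' m * SFG - b m * G' m * SFH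
          - b m * (G' m * H' m) * SF - b m * F' m * SGH - b m * (F' m * H' m) * SG
          + b m * (F' m * G' m) * SH + b m * (F' m * G' m * H' m) * SA) := by
      funext m; ring
    rw [hfun]
    exact h
  have htot : TB * SFGH + TH * SFG - TG * SFH - TGH * SF - TF * SGH - TFH * SG + TFG * SH + TFGH * SA ≤ 0 := by
    rw [← hOuter.tsum_eq]
    exact tsum_nonpos (fun m => mul_nonpos_of_nonneg_of_nonpos (hb m) (hneg m))
  linarith

theorem thm3
    (q₁ q₂ β δ μ ν η ζ : ℝ)
    (hq₁ : 0 < q₁) (hq₁' : q₁ < 1) (hq₂ : 0 < q₂) (hq₂' : q₂ < 1)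
    (hβ : 0 < β) (hδ : 0 < δ) (hμ : 0 < μ) (hν : 0 < ν)
    (hη : -1 < η) (hζ : -1 < ζ)
    (f g h u v : ℝ → ℝ)
    (hcf : ContinuousOn f (Set.Ici 0))
    (hcg : ContinuousOn g (Set.Ici 0))
    (hch : ContinuousOn h (Set.Ici 0))
    (hcu : ContinuousOn u (Set.Ici 0))
    (hcv : ContinuousOn v (Set.Ici 0))
    (hfg : Asynchronous f g)
    (hh0 : ∀ x : ℝ, 0 ≤ x → 0 ≤ h x)
    (hu0 : ∀ x : ℝ, 0 ≤ x → 0 ≤ u x)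
    (hv0 : ∀ x : ℝ, 0 ≤ x → 0 ≤ v x)
    (t : ℝ) (ht : 0 < t) :
    EK q₂ ζ ν δ (fun s => v s * f s * g s * h s) t * EK q₁ η μ β u t +
      EK q₂ ζ ν δ (fun s => v s * f s * g s) t * EK q₁ η μ β (fun s => u s * h s) t +
      EK q₂ ζ ν δ (fun s => v s * h s) t * EK q₁ η μ β (fun s => u s * f s * g s) t +
      EK q₂ ζ ν δ v t * EK q₁ η μ β (fun s => u s * f s * g s * h s) t
      ≤
      EK q₂ ζ ν δ (fun s => v s * g s * h s) t * EK q₁ η μ β (fun s => u s * f s) t +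
      EK q₂ ζ ν δ (fun s => v s * f s * h s) t * EK q₁ η μ β (fun s => u s * g s) t +
      EK q₂ ζ ν δ (fun s => v s * f s) t * EK q₁ η μ β (fun s => u s * g s * h s) t +
      EK q₂ ζ ν δ (fun s => v s * g s) t * EK q₁ η μ β (fun s => u s * f s * h s) t := by
  have hx0 : ∀ k : ℕ, (0:ℝ) ≤ t * q₁ ^ ((k:ℝ) / β) := fun k => (point_mem q₁ β t hq₁ hq₁' hβ ht k).1
  have hy0 : ∀ m : ℕ, (0:ℝ) ≤ t * q₂ ^ ((m:ℝ) / δ) := fun m => (point_mem q₂ δ t hq₂ hq₂' hδ ht m).1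
  have SU : ∀ φ : ℝ → ℝ, ContinuousOn φ (Set.Ici 0) → Summable (fun k : ℕ => qPoch q₁ (q₁ ^ μ) k / qPoch q₁ q₁ k * q₁ ^ ((k:ℝ) * (η + 1)) * φ (t * q₁ ^ ((k:ℝ) / β))) :=
    fun φ hφ => EK_summable q₁ μ η β t hq₁ hq₁' hμ hη hβ ht φ hφ
  have SV : ∀ φ : ℝ → ℝ, ContinuousOn φ (Set.Ici 0) → Summable (fun m : ℕ => qPoch q₂ (q₂ ^ ν) m / qPoch q₂ q₂ m * q₂ ^ ((m:ℝ) * (ζ + 1)) * φ (t * q₂ ^ ((m:ℝ) / δ))) :=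
    fun φ hφ => EK_summable q₂ ν ζ δ t hq₂ hq₂' hν hζ hδ ht φ hφ
  have sSA : Summable (fun k : ℕ => qPoch q₁ (q₁ ^ μ) k / qPoch q₁ q₁ k * q₁ ^ ((k:ℝ) * (η + 1)) * u (t * q₁ ^ ((k:ℝ) / β))) :=
    (SU u (hcu)).congr (fun k => by ring)
  have sSF : Summable (fun k : ℕ => qPoch q₁ (q₁ ^ μ) k / qPoch q₁ q₁ k * q₁ ^ ((k:ℝ) * (η + 1)) * u (t * q₁ ^ ((k:ℝ) / β)) * f (t * q₁ ^ ((k:ℝ) / β))) :=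
    (SU (fun s => u s * f s) ((hcu.mul hcf))).congr (fun k => by ring)
  have sSG : Summable (fun k : ℕ => qPoch q₁ (q₁ ^ μ) k / qPoch q₁ q₁ k * q₁ ^ ((k:ℝ) * (η + 1)) * u (t * q₁ ^ ((k:ℝ) / β)) * g (t * q₁ ^ ((k:ℝ) / β))) :=
    (SU (fun s => u s * g s) ((hcu.mul hcg))).congr (fun k => by ring)
  have sSH : Summable (fun k : ℕ => qPoch q₁ (q₁ ^ μ) k / qPoch q₁ q₁ k * q₁ ^ ((k:ℝ) * (η + 1)) * u (t * q₁ ^ ((k:ℝ) / β)) * h (t * q₁ ^ ((k:ℝ) / β))) :=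
    (SU (fun s => u s * h s) ((hcu.mul hch))).congr (fun k => by ring)
  have sSFG : Summable (fun k : ℕ => qPoch q₁ (q₁ ^ μ) k / qPoch q₁ q₁ k * q₁ ^ ((k:ℝ) * (η + 1)) * u (t * q₁ ^ ((k:ℝ) / β)) * (f (t * q₁ ^ ((k:ℝ) / β)) * g (t * q₁ ^ ((k:ℝ) / β)))) :=
    (SU (fun s => u s * f s * g s) (((hcu.mul hcf).mul hcg))).congr (fun k => by ring)
  have sSFH : Summable (fun k : ℕ => qPoch q₁ (q₁ ^ μ) k / qPoch q₁ q₁ k * q₁ ^ ((k:ℝ) * (η + 1)) * u (t * q₁ ^ ((k:ℝ) / β)) * (f (t * q₁ ^ ((k:ℝ) / β)) * h (t * q₁ ^ ((k:ℝ) / β)))) :=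
    (SU (fun s => u s * f s * h s) (((hcu.mul hcf).mul hch))).congr (fun k => by ring)
  have sSGH : Summable (fun k : ℕ => qPoch q₁ (q₁ ^ μ) k / qPoch q₁ q₁ k * q₁ ^ ((k:ℝ) * (η + 1)) * u (t * q₁ ^ ((k:ℝ) / β)) * (g (t * q₁ ^ ((k:ℝ) / β)) * h (t * q₁ ^ ((k:ℝ) / β)))) :=
    (SU (fun s => u s * g s * h s) (((hcu.mul hcg).mul hch))).congr (fun k => by ring)
  have sSFGH : Summable (fun k : ℕ => qPoch q₁ (q₁ ^ μ) k / qPoch q₁ q₁ k * q₁ ^ ((k:ℝ) * (η + 1)) * u (t * q₁ ^ ((k:ℝ) / β)) * (f (t * q₁ ^ ((k:ℝ) / β)) * g (t * q₁ ^ ((k:ℝ) / β)) * h (t * q₁ ^ ((k:ℝ) / β)))) :=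
    (SU (fun s => u s * f s * g s * h s) ((((hcu.mul hcf).mul hcg).mul hch))).congr (fun k => by ring)
  have sTA : Summable (fun m : ℕ => qPoch q₂ (q₂ ^ ν) m / qPoch q₂ q₂ m * q₂ ^ ((m:ℝ) * (ζ + 1)) * v (t * q₂ ^ ((m:ℝ) / δ))) :=
    (SV v (hcv)).congr (fun m => by ring)
  have sTF : Summable (fun m : ℕ => qPoch q₂ (q₂ ^ ν) m / qPoch q₂ q₂ m * q₂ ^ ((m:ℝ) * (ζ + 1)) * v (t * q₂ ^ ((m:ℝ) / δ)) * f (t * q₂ ^ ((m:ℝ) / δ))) :=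
    (SV (fun s => v s * f s) ((hcv.mul hcf))).congr (fun m => by ring)
  have sTG : Summable (fun m : ℕ => qPoch q₂ (q₂ ^ ν) m / qPoch q₂ q₂ m * q₂ ^ ((m:ℝ) * (ζ + 1)) * v (t * q₂ ^ ((m:ℝ) / δ)) * g (t * q₂ ^ ((m:ℝ) / δ))) :=
    (SV (fun s => v s * g s) ((hcv.mul hcg))).congr (fun m => by ring)
  have sTH : Summable (fun m : ℕ => qPoch q₂ (q₂ ^ ν) m / qPoch q₂ q₂ m * q₂ ^ ((m:ℝ) * (ζ + 1)) * v (t * q₂ ^ ((m:ℝ) / δ)) * h (t * q₂ ^ ((m:ℝ) / δ))) :=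
    (SV (fun s => v s * h s) ((hcv.mul hch))).congr (fun m => by ring)
  have sTFG : Summable (fun m : ℕ => qPoch q₂ (q₂ ^ ν) m / qPoch q₂ q₂ m * q₂ ^ ((m:ℝ) * (ζ + 1)) * v (t * q₂ ^ ((m:ℝ) / δ)) * (f (t * q₂ ^ ((m:ℝ) / δ)) * g (t * q₂ ^ ((m:ℝ) / δ)))) :=
    (SV (fun s => v s * f s * g s) (((hcv.mul hcf).mul hcg))).congr (fun m => by ring)
  have sTFH : Summable (fun m : ℕ => qPoch q₂ (q₂ ^ ν) m / qPoch q₂ q₂ m * q₂ ^ ((m:ℝ) * (ζ + 1)) * v (t * q₂ ^ ((m:ℝ) / δ)) * (f (t * q₂ ^ ((m:ℝ) / δ)) * h (t * q₂ ^ ((m:ℝ) / δ)))) :=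
    (SV (fun s => v s * f s * h s) (((hcv.mul hcf).mul hch))).congr (fun m => by ring)
  have sTGH : Summable (fun m : ℕ => qPoch q₂ (q₂ ^ ν) m / qPoch q₂ q₂ m * q₂ ^ ((m:ℝ) * (ζ + 1)) * v (t * q₂ ^ ((m:ℝ) / δ)) * (g (t * q₂ ^ ((m:ℝ) / δ)) * h (t * q₂ ^ ((m:ℝ) / δ)))) :=
    (SV (fun s => v s * g s * h s) (((hcv.mul hcg).mul hch))).congr (fun m => by ring)
  have sTFGH : Summable (fun m : ℕ => qPoch q₂ (q₂ ^ ν) m / qPoch q₂ q₂ m * q₂ ^ ((m:ℝ) * (ζ + 1)) * v (t * q₂ ^ ((m:ℝ) / δ)) * (f (t * q₂ ^ ((m:ℝ) / δ)) * g (t * q₂ ^ ((m:ℝ) / δ)) * h (t * q₂ ^ ((m:ℝ) / δ)))) :=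
    (SV (fun s => v s * f s * g s * h s) ((((hcv.mul hcf).mul hcg).mul hch))).congr (fun m => by ring)
  have ha : ∀ k : ℕ, (0:ℝ) ≤ qPoch q₁ (q₁ ^ μ) k / qPoch q₁ q₁ k * q₁ ^ ((k:ℝ) * (η + 1)) * u (t * q₁ ^ ((k:ℝ) / β)) :=
    fun k => mul_nonneg (weight_pos q₁ μ η hq₁ hq₁' hμ k).le (hu0 _ (hx0 k))
  have hb : ∀ m : ℕ, (0:ℝ) ≤ qPoch q₂ (q₂ ^ ν) m / qPoch q₂ q₂ m * q₂ ^ ((m:ℝ) * (ζ + 1)) * v (t * q₂ ^ ((m:ℝ) / δ)) :=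
    fun m => mul_nonneg (weight_pos q₂ ν ζ hq₂ hq₂' hν m).le (hv0 _ (hy0 m))
  have hHk : ∀ k : ℕ, (0:ℝ) ≤ h (t * q₁ ^ ((k:ℝ) / β)) := fun k => hh0 _ (hx0 k)
  have hHm : ∀ m : ℕ, (0:ℝ) ≤ h (t * q₂ ^ ((m:ℝ) / δ)) := fun m => hh0 _ (hy0 m)
  have hsy : ∀ k m : ℕ, (f (t * q₁ ^ ((k:ℝ) / β)) - f (t * q₂ ^ ((m:ℝ) / δ))) * (g (t * q₁ ^ ((k:ℝ) / β)) - g (t * q₂ ^ ((m:ℝ) / δ))) ≤ 0 :=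
    fun k m => hfg _ _ (hx0 k) (hy0 m)
  have key := cheb_core (fun k => qPoch q₁ (q₁ ^ μ) k / qPoch q₁ q₁ k * q₁ ^ ((k:ℝ) * (η + 1)) * u (t * q₁ ^ ((k:ℝ) / β))) (fun m => qPoch q₂ (q₂ ^ ν) m / qPoch q₂ q₂ m * q₂ ^ ((m:ℝ) * (ζ + 1)) * v (t * q₂ ^ ((m:ℝ) / δ)))
    (fun k => f (t * q₁ ^ ((k:ℝ) / β))) (fun k => g (t * q₁ ^ ((k:ℝ) / β))) (fun k => h (t * q₁ ^ ((k:ℝ) / β)))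
    (fun m => f (t * q₂ ^ ((m:ℝ) / δ))) (fun m => g (t * q₂ ^ ((m:ℝ) / δ))) (fun m => h (t * q₂ ^ ((m:ℝ) / δ)))
    ha hb hHk hHm hsy sSA sSF sSG sSH sSFG sSFH sSGH sSFGH sTA sTF sTG sTH sTFG sTFH sTGH sTFGH
  have E1 : EK q₂ ζ ν δ (fun s => v s * f s * g s * h s) t = (δ * (1 - q₂ ^ (1 / δ)) * (1 - q₂) ^ (ν - 1)) * (∑' m : ℕ, qPoch q₂ (q₂ ^ ν) m / qPoch q₂ q₂ m * q₂ ^ ((m:ℝ) * (ζ + 1)) * v (t * q₂ ^ ((m:ℝ) / δ)) * (f (t * q₂ ^ ((m:ℝ) / δ)) * g (t * q₂ ^ ((m:ℝ) / δ)) * h (t * q₂ ^ ((m:ℝ) / δ)))) := by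
    simp only [EK]
    congr 1
    exact tsum_congr (fun i => by ring)
  have E2 : EK q₂ ζ ν δ (fun s => v s * f s * g s) t = (δ * (1 - q₂ ^ (1 / δ)) * (1 - q₂) ^ (ν - 1)) * (∑' m : ℕ, qPoch q₂ (q₂ ^ ν) m / qPoch q₂ q₂ m * q₂ ^ ((m:ℝ) * (ζ + 1)) * v (t * q₂ ^ ((m:ℝ) / δ)) * (f (t * q₂ ^ ((m:ℝ) / δ)) * g (t * q₂ ^ ((m:ℝ) / δ)))) := by
    simp only [EK]
    congr 1
    exact tsum_congr (fun i => by ring)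
  have E3 : EK q₂ ζ ν δ (fun s => v s * h s) t = (δ * (1 - q₂ ^ (1 / δ)) * (1 - q₂) ^ (ν - 1)) * (∑' m : ℕ, qPoch q₂ (q₂ ^ ν) m / qPoch q₂ q₂ m * q₂ ^ ((m:ℝ) * (ζ + 1)) * v (t * q₂ ^ ((m:ℝ) / δ)) * h (t * q₂ ^ ((m:ℝ) / δ))) := by
    simp only [EK]
    congr 1
    exact tsum_congr (fun i => by ring)
  have E4 : EK q₂ ζ ν δ v t = (δ * (1 - q₂ ^ (1 / δ)) * (1 - q₂) ^ (ν - 1)) * (∑' m : ℕ, qPoch q₂ (q₂ ^ ν) m / qPoch q₂ q₂ m * q₂ ^ ((m:ℝ) * (ζ + 1)) * v (t * q₂ ^ ((m:ℝ) / δ))) := rfl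
  have E5 : EK q₂ ζ ν δ (fun s => v s * g s * h s) t = (δ * (1 - q₂ ^ (1 / δ)) * (1 - q₂) ^ (ν - 1)) * (∑' m : ℕ, qPoch q₂ (q₂ ^ ν) m / qPoch q₂ q₂ m * q₂ ^ ((m:ℝ) * (ζ + 1)) * v (t * q₂ ^ ((m:ℝ) / δ)) * (g (t * q₂ ^ ((m:ℝ) / δ)) * h (t * q₂ ^ ((m:ℝ) / δ)))) := by
    simp only [EK]
    congr 1
    exact tsum_congr (fun i => by ring)
  have E6 : EK q₂ ζ ν δ (fun s => v s * f s * h s) t = (δ * (1 - q₂ ^ (1 / δ)) * (1 - q₂) ^ (ν - 1)) * (∑' m : ℕ, qPoch q₂ (q₂ ^ ν) m / qPoch q₂ q₂ m * q₂ ^ ((m:ℝ) * (ζ + 1)) * v (t * q₂ ^ ((m:ℝ) / δ)) * (f (t * q₂ ^ ((m:ℝ) / δ)) * h (t * q₂ ^ ((m:ℝ) / δ)))) := by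
    simp only [EK]
    congr 1
    exact tsum_congr (fun i => by ring)
  have E7 : EK q₂ ζ ν δ (fun s => v s * f s) t = (δ * (1 - q₂ ^ (1 / δ)) * (1 - q₂) ^ (ν - 1)) * (∑' m : ℕ, qPoch q₂ (q₂ ^ ν) m / qPoch q₂ q₂ m * q₂ ^ ((m:ℝ) * (ζ + 1)) * v (t * q₂ ^ ((m:ℝ) / δ)) * f (t * q₂ ^ ((m:ℝ) / δ))) := by
    simp only [EK]
    congr 1
    exact tsum_congr (fun i => by ring)
  have E8 : EK q₂ ζ ν δ (fun s => v s * g s) t = (δ * (1 - q₂ ^ (1 / δ)) * (1 - q₂) ^ (ν - 1)) * (∑' m : ℕ, qPoch q₂ (q₂ ^ ν) m / qPoch q₂ q₂ m * q₂ ^ ((m:ℝ) * (ζ + 1)) * v (t * q₂ ^ ((m:ℝ) / δ)) * g (t * q₂ ^ ((m:ℝ) / δ))) := by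
    simp only [EK]
    congr 1
    exact tsum_congr (fun i => by ring)
  have F1 : EK q₁ η μ β u t = (β * (1 - q₁ ^ (1 / β)) * (1 - q₁) ^ (μ - 1)) * (∑' k : ℕ, qPoch q₁ (q₁ ^ μ) k / qPoch q₁ q₁ k * q₁ ^ ((k:ℝ) * (η + 1)) * u (t * q₁ ^ ((k:ℝ) / β))) := rfl
  have F2 : EK q₁ η μ β (fun s => u s * h s) t = (β * (1 - q₁ ^ (1 / β)) * (1 - q₁) ^ (μ - 1)) * (∑' k : ℕ, qPoch q₁ (q₁ ^ μ) k / qPoch q₁ q₁ k * q₁ ^ ((k:ℝ) * (η + 1)) * u (t * q₁ ^ ((k:ℝ) / β)) * h (t * q₁ ^ ((k:ℝ) / β))) := by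
    simp only [EK]
    congr 1
    exact tsum_congr (fun i => by ring)
  have F3 : EK q₁ η μ β (fun s => u s * f s * g s) t = (β * (1 - q₁ ^ (1 / β)) * (1 - q₁) ^ (μ - 1)) * (∑' k : ℕ, qPoch q₁ (q₁ ^ μ) k / qPoch q₁ q₁ k * q₁ ^ ((k:ℝ) * (η + 1)) * u (t * q₁ ^ ((k:ℝ) / β)) * (f (t * q₁ ^ ((k:ℝ) / β)) * g (t * q₁ ^ ((k:ℝ) / β)))) := by
    simp only [EK]
    congr 1
    exact tsum_congr (fun i => by ring)
  have F4 : EK q₁ η μ β (fun s => u s * f s * g s * h s) t = (β * (1 - q₁ ^ (1 / β)) * (1 - q₁) ^ (μ - 1)) * (∑' k : ℕ, qPoch q₁ (q₁ ^ μ) k / qPoch q₁ q₁ k * q₁ ^ ((k:ℝ) * (η + 1)) * u (t * q₁ ^ ((k:ℝ) / β)) * (f (t * q₁ ^ ((k:ℝ) / β)) * g (t * q₁ ^ ((k:ℝ) / β)) * h (t * q₁ ^ ((k:ℝ) / β)))) := by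
    simp only [EK]
    congr 1
    exact tsum_congr (fun i => by ring)
  have F5 : EK q₁ η μ β (fun s => u s * f s) t = (β * (1 - q₁ ^ (1 / β)) * (1 - q₁) ^ (μ - 1)) * (∑' k : ℕ, qPoch q₁ (q₁ ^ μ) k / qPoch q₁ q₁ k * q₁ ^ ((k:ℝ) * (η + 1)) * u (t * q₁ ^ ((k:ℝ) / β)) * f (t * q₁ ^ ((k:ℝ) / β))) := by
    simp only [EK]
    congr 1
    exact tsum_congr (fun i => by ring)
  have F6 : EK q₁ η μ β (fun s => u s * g s) t = (β * (1 - q₁ ^ (1 / β)) * (1 - q₁) ^ (μ - 1)) * (∑' k : ℕ, qPoch q₁ (q₁ ^ μ) k / qPoch q₁ q₁ k * q₁ ^ ((k:ℝ) * (η + 1)) * u (t * q₁ ^ ((k:ℝ) / β)) * g (t * q₁ ^ ((k:ℝ) / β))) := by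
    simp only [EK]
    congr 1
    exact tsum_congr (fun i => by ring)
  have F7 : EK q₁ η μ β (fun s => u s * g s * h s) t = (β * (1 - q₁ ^ (1 / β)) * (1 - q₁) ^ (μ - 1)) * (∑' k : ℕ, qPoch q₁ (q₁ ^ μ) k / qPoch q₁ q₁ k * q₁ ^ ((k:ℝ) * (η + 1)) * u (t * q₁ ^ ((k:ℝ) / β)) * (g (t * q₁ ^ ((k:ℝ) / β)) * h (t * q₁ ^ ((k:ℝ) / β)))) := by
    simp only [EK]
    congr 1
    exact tsum_congr (fun i => by ring)
  have F8 : EK q₁ η μ β (fun s => u s * f s * h s) t = (β * (1 - q₁ ^ (1 / β)) * (1 - q₁) ^ (μ - 1)) * (∑' k : ℕ, qPoch q₁ (q₁ ^ μ) k / qPoch q₁ q₁ k * q₁ ^ ((k:ℝ) * (η + 1)) * u (t * q₁ ^ ((k:ℝ) / β)) * (f (t * q₁ ^ ((k:ℝ) / β)) * h (t * q₁ ^ ((k:ℝ) / β)))) := by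
    simp only [EK]
    congr 1
    exact tsum_congr (fun i => by ring)
  rw [E1, E2, E3, E4, E5, E6, E7, E8, F1, F2, F3, F4, F5, F6, F7, F8]
  have hC : (0:ℝ) ≤ (β * (1 - q₁ ^ (1 / β)) * (1 - q₁) ^ (μ - 1)) * (δ * (1 - q₂ ^ (1 / δ)) * (1 - q₂) ^ (ν - 1)) := by
    have h1 : q₁ ^ (1 / β) < 1 := Real.rpow_lt_one hq₁.le hq₁' (by positivity)
    have h2 : q₂ ^ (1 / δ) < 1 := Real.rpow_lt_one hq₂.le hq₂' (by positivity)
    have h3 : (0:ℝ) < (1 - q₁) ^ (μ - 1) := Real.rpow_pos_of_pos (by linarith) _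
    have h4 : (0:ℝ) < (1 - q₂) ^ (ν - 1) := Real.rpow_pos_of_pos (by linarith) _
    have h5 : (0:ℝ) < 1 - q₁ ^ (1 / β) := by linarith
    have h6 : (0:ℝ) < 1 - q₂ ^ (1 / δ) := by linarith
    positivity
  have key2 : (∑' m : ℕ, qPoch q₂ (q₂ ^ ν) m / qPoch q₂ q₂ m * q₂ ^ ((m:ℝ) * (ζ + 1)) * v (t * q₂ ^ ((m:ℝ) / δ)) * (f (t * q₂ ^ ((m:ℝ) / δ)) * g (t * q₂ ^ ((m:ℝ) / δ)) * h (t * q₂ ^ ((m:ℝ) / δ)))) * (∑' k : ℕ, qPoch q₁ (q₁ ^ μ) k / qPoch q₁ q₁ k * q₁ ^ ((k:ℝ) * (η + 1)) * u (t * q₁ ^ ((k:ℝ) / β))) + (∑' m : ℕ, qPoch q₂ (q₂ ^ ν) m / qPoch q₂ q₂ m * q₂ ^ ((m:ℝ) * (ζ + 1)) * v (t * q₂ ^ ((m:ℝ) / δ)) * (f (t * q₂ ^ ((m:ℝ) / δ)) * g (t * q₂ ^ ((m:ℝ) / δ)))) * (∑' k : ℕ, qPoch q₁ (q₁ ^ μ)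 k / qPoch q₁ q₁ k * q₁ ^ ((k:ℝ) * (η + 1)) * u (t * q₁ ^ ((k:ℝ) / β)) * h (t * q₁ ^ ((k:ℝ) / β))) + (∑' m : ℕ, qPoch q₂ (q₂ ^ ν) m / qPoch q₂ q₂ m * q₂ ^ ((m:ℝ) * (ζ + 1)) * v (t * q₂ ^ ((m:ℝ) / δ)) * h (t * q₂ ^ ((m:ℝ) / δ))) * (∑' k : ℕ, qPoch q₁ (q₁ ^ μ) k / qPoch q₁ q₁ k * q₁ ^ ((k:ℝ) * (η + 1)) * u (t * q₁ ^ ((k:ℝ) / β)) * (f (t * q₁ ^ ((k:ℝ) / β)) * g (t * q₁ ^ ((k:ℝ) / β)))) + (∑' m : ℕ, qPoch q₂ (q₂ ^ ν) m / qPoch q₂ q₂ m * q₂ ^ ((m:ℝ) * (ζ + 1)) * v (t * q₂ ^ ((m:ℝ) / δ))) * (∑' k : ℕ, qPoch q₁ (q₁ ^ μ) k / qPoch q₁ q₁ k * q₁ ^ ((k:ℝ) * (η + 1)) * u (t * q₁ ^ ((k:ℝ) / β)) * (f (t * q₁ ^ ((k:ℝ) / β)) * g (t * q₁ ^ ((k:ℝ)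 / β)) * h (t * q₁ ^ ((k:ℝ) / β)))) ≤ (∑' m : ℕ, qPoch q₂ (q₂ ^ ν) m / qPoch q₂ q₂ m * q₂ ^ ((m:ℝ) * (ζ + 1)) * v (t * q₂ ^ ((m:ℝ) / δ)) * (g (t * q₂ ^ ((m:ℝ) / δ)) * h (t * q₂ ^ ((m:ℝ) / δ)))) * (∑' k : ℕ, qPoch q₁ (q₁ ^ μ) k / qPoch q₁ q₁ k * q₁ ^ ((k:ℝ) * (η + 1)) * u (t * q₁ ^ ((k:ℝ) / β)) * f (t * q₁ ^ ((k:ℝ) / β))) + (∑' m : ℕ, qPoch q₂ (q₂ ^ ν) m / qPoch q₂ q₂ m * q₂ ^ ((m:ℝ) * (ζ + 1)) * v (t * q₂ ^ ((m:ℝ) / δ)) * (f (t * q₂ ^ ((m:ℝ) / δ)) * h (t * q₂ ^ ((m:ℝ) / δ)))) * (∑' k : ℕ, qPoch q₁ (q₁ ^ μ) k / qPoch q₁ q₁ k * q₁ ^ ((k:ℝ) * (η + 1)) * u (t * q₁ ^ ((k:ℝ) / β)) * g (t * q₁ ^ ((k:ℝ) / β))) + (∑' m : ℕ, qPoch q₂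 (q₂ ^ ν) m / qPoch q₂ q₂ m * q₂ ^ ((m:ℝ) * (ζ + 1)) * v (t * q₂ ^ ((m:ℝ) / δ)) * f (t * q₂ ^ ((m:ℝ) / δ))) * (∑' k : ℕ, qPoch q₁ (q₁ ^ μ) k / qPoch q₁ q₁ k * q₁ ^ ((k:ℝ) * (η + 1)) * u (t * q₁ ^ ((k:ℝ) / β)) * (g (t * q₁ ^ ((k:ℝ) / β)) * h (t * q₁ ^ ((k:ℝ) / β)))) + (∑' m : ℕ, qPoch q₂ (q₂ ^ ν) m / qPoch q₂ q₂ m * q₂ ^ ((m:ℝ) * (ζ + 1)) * v (t * q₂ ^ ((m:ℝ) / δ)) * g (t * q₂ ^ ((m:ℝ) / δ))) * (∑' k : ℕ, qPoch q₁ (q₁ ^ μ) k / qPoch q₁ q₁ k * q₁ ^ ((k:ℝ) * (η + 1)) * u (t * q₁ ^ ((k:ℝ) / β)) * (f (t * q₁ ^ ((k:ℝ) / β)) * h (t * q₁ ^ ((k:ℝ) / β)))) := key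
  calc (δ * (1 - q₂ ^ (1 / δ)) * (1 - q₂) ^ (ν - 1)) * (∑' m : ℕ, qPoch q₂ (q₂ ^ ν) m / qPoch q₂ q₂ m * q₂ ^ ((m:ℝ) * (ζ + 1)) * v (t * q₂ ^ ((m:ℝ) / δ)) * (f (t * q₂ ^ ((m:ℝ) / δ)) * g (t * q₂ ^ ((m:ℝ) / δ)) * h (t * q₂ ^ ((m:ℝ) / δ)))) * ((β * (1 - q₁ ^ (1 / β)) * (1 - q₁) ^ (μ - 1)) * (∑' k : ℕ, qPoch q₁ (q₁ ^ μ) k / qPoch q₁ q₁ k * q₁ ^ ((k:ℝ) * (η + 1)) * u (t * q₁ ^ ((k:ℝ) / β)))) + (δ * (1 - q₂ ^ (1 / δ)) * (1 - q₂) ^ (ν - 1)) * (∑' m : ℕ, qPoch q₂ (q₂ ^ ν) m / qPoch q₂ q₂ m * q₂ ^ ((m:ℝ) * (ζ + 1)) * v (t * q₂ ^ ((m:ℝ) / δ)) * (f (t * q₂ ^ ((m:ℝ) / δ)) * g (t * q₂ ^ ((m:ℝ) / δ)))) * ((β * (1 - q₁ ^ (1 / β)) * (1 - q₁) ^ (μ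 - 1)) * (∑' k : ℕ, qPoch q₁ (q₁ ^ μ) k / qPoch q₁ q₁ k * q₁ ^ ((k:ℝ) * (η + 1)) * u (t * q₁ ^ ((k:ℝ) / β)) * h (t * q₁ ^ ((k:ℝ) / β)))) + (δ * (1 - q₂ ^ (1 / δ)) * (1 - q₂) ^ (ν - 1)) * (∑' m : ℕ, qPoch q₂ (q₂ ^ ν) m / qPoch q₂ q₂ m * q₂ ^ ((m:ℝ) * (ζ + 1)) * v (t * q₂ ^ ((m:ℝ) / δ)) * h (t * q₂ ^ ((m:ℝ) / δ))) * ((β * (1 - q₁ ^ (1 / β)) * (1 - q₁) ^ (μ - 1)) * (∑' k : ℕ, qPoch q₁ (q₁ ^ μ) k / qPoch q₁ q₁ k * q₁ ^ ((k:ℝ) * (η + 1)) * u (t * q₁ ^ ((k:ℝ) / β)) * (f (t * q₁ ^ ((k:ℝ) / β)) * g (t * q₁ ^ ((k:ℝ) / β))))) + (δ * (1 - q₂ ^ (1 / δ)) * (1 - q₂) ^ (ν - 1)) * (∑' m : ℕ, qPoch q₂ (q₂ ^ ν) m / qPoch q₂ q₂ m * q₂ ^ ((m:ℝ) * (ζ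 + 1)) * v (t * q₂ ^ ((m:ℝ) / δ))) * ((β * (1 - q₁ ^ (1 / β)) * (1 - q₁) ^ (μ - 1)) * (∑' k : ℕ, qPoch q₁ (q₁ ^ μ) k / qPoch q₁ q₁ k * q₁ ^ ((k:ℝ) * (η + 1)) * u (t * q₁ ^ ((k:ℝ) / β)) * (f (t * q₁ ^ ((k:ℝ) / β)) * g (t * q₁ ^ ((k:ℝ) / β)) * h (t * q₁ ^ ((k:ℝ) / β)))))
      = ((β * (1 - q₁ ^ (1 / β)) * (1 - q₁) ^ (μ - 1)) * (δ * (1 - q₂ ^ (1 / δ)) * (1 - q₂) ^ (ν - 1))) * ((∑' m : ℕ, qPoch q₂ (q₂ ^ ν) m / qPoch q₂ q₂ m * q₂ ^ ((m:ℝ) * (ζ + 1)) * v (t * q₂ ^ ((m:ℝ) / δ)) * (f (t * q₂ ^ ((m:ℝ) / δ)) * g (t * q₂ ^ ((m:ℝ) / δ)) * h (t * q₂ ^ ((m:ℝ) / δ)))) * (∑' k : ℕ, qPoch q₁ (q₁ ^ μ) k / qPoch q₁ q₁ k * q₁ ^ ((k:ℝ) * (η + 1)) * u (t * q₁ ^ ((k:ℝ)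 / β))) + (∑' m : ℕ, qPoch q₂ (q₂ ^ ν) m / qPoch q₂ q₂ m * q₂ ^ ((m:ℝ) * (ζ + 1)) * v (t * q₂ ^ ((m:ℝ) / δ)) * (f (t * q₂ ^ ((m:ℝ) / δ)) * g (t * q₂ ^ ((m:ℝ) / δ)))) * (∑' k : ℕ, qPoch q₁ (q₁ ^ μ) k / qPoch q₁ q₁ k * q₁ ^ ((k:ℝ) * (η + 1)) * u (t * q₁ ^ ((k:ℝ) / β)) * h (t * q₁ ^ ((k:ℝ) / β))) + (∑' m : ℕ, qPoch q₂ (q₂ ^ ν) m / qPoch q₂ q₂ m * q₂ ^ ((m:ℝ) * (ζ + 1)) * v (t * q₂ ^ ((m:ℝ) / δ)) * h (t * q₂ ^ ((m:ℝ) / δ))) * (∑' k : ℕ, qPoch q₁ (q₁ ^ μ) k / qPoch q₁ q₁ k * q₁ ^ ((k:ℝ) * (η + 1)) * u (t * q₁ ^ ((k:ℝ) / β)) * (f (t * q₁ ^ ((k:ℝ) / β)) * g (t * q₁ ^ ((k:ℝ) / β)))) + (∑' m : ℕ, qPoch q₂ (q₂ ^ ν) m / qPoch q₂ q₂ m * q₂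 ^ ((m:ℝ) * (ζ + 1)) * v (t * q₂ ^ ((m:ℝ) / δ))) * (∑' k : ℕ, qPoch q₁ (q₁ ^ μ) k / qPoch q₁ q₁ k * q₁ ^ ((k:ℝ) * (η + 1)) * u (t * q₁ ^ ((k:ℝ) / β)) * (f (t * q₁ ^ ((k:ℝ) / β)) * g (t * q₁ ^ ((k:ℝ) / β)) * h (t * q₁ ^ ((k:ℝ) / β))))) := by ring
    _ ≤ ((β * (1 - q₁ ^ (1 / β)) * (1 - q₁) ^ (μ - 1)) * (δ * (1 - q₂ ^ (1 / δ)) * (1 - q₂) ^ (ν - 1))) * ((∑' m : ℕ, qPoch q₂ (q₂ ^ ν) m / qPoch q₂ q₂ m * q₂ ^ ((m:ℝ) * (ζ + 1)) * v (t * q₂ ^ ((m:ℝ) / δ)) * (g (t * q₂ ^ ((m:ℝ) / δ)) * h (t * q₂ ^ ((m:ℝ) / δ)))) * (∑' k : ℕ, qPoch q₁ (q₁ ^ μ) k / qPoch q₁ q₁ k * q₁ ^ ((k:ℝ) * (η + 1)) * u (t * q₁ ^ ((k:ℝ) / β)) * f (t * q₁ ^ ((k:ℝ) / β))) + (∑'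 m : ℕ, qPoch q₂ (q₂ ^ ν) m / qPoch q₂ q₂ m * q₂ ^ ((m:ℝ) * (ζ + 1)) * v (t * q₂ ^ ((m:ℝ) / δ)) * (f (t * q₂ ^ ((m:ℝ) / δ)) * h (t * q₂ ^ ((m:ℝ) / δ)))) * (∑' k : ℕ, qPoch q₁ (q₁ ^ μ) k / qPoch q₁ q₁ k * q₁ ^ ((k:ℝ) * (η + 1)) * u (t * q₁ ^ ((k:ℝ) / β)) * g (t * q₁ ^ ((k:ℝ) / β))) + (∑' m : ℕ, qPoch q₂ (q₂ ^ ν) m / qPoch q₂ q₂ m * q₂ ^ ((m:ℝ) * (ζ + 1)) * v (t * q₂ ^ ((m:ℝ) / δ)) * f (t * q₂ ^ ((m:ℝ) / δ))) * (∑' k : ℕ, qPoch q₁ (q₁ ^ μ) k / qPoch q₁ q₁ k * q₁ ^ ((k:ℝ) * (η + 1)) * u (t * q₁ ^ ((k:ℝ) / β)) * (g (t * q₁ ^ ((k:ℝ) / β)) * h (t * q₁ ^ ((k:ℝ) / β)))) + (∑' m : ℕ, qPoch q₂ (q₂ ^ ν) m / qPoch q₂ q₂ m * q₂ ^ ((m:ℝ)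 * (ζ + 1)) * v (t * q₂ ^ ((m:ℝ) / δ)) * g (t * q₂ ^ ((m:ℝ) / δ))) * (∑' k : ℕ, qPoch q₁ (q₁ ^ μ) k / qPoch q₁ q₁ k * q₁ ^ ((k:ℝ) * (η + 1)) * u (t * q₁ ^ ((k:ℝ) / β)) * (f (t * q₁ ^ ((k:ℝ) / β)) * h (t * q₁ ^ ((k:ℝ) / β))))) := mul_le_mul_of_nonneg_left key2 hC
    _ = (δ * (1 - q₂ ^ (1 / δ)) * (1 - q₂) ^ (ν - 1)) * (∑' m : ℕ, qPoch q₂ (q₂ ^ ν) m / qPoch q₂ q₂ m * q₂ ^ ((m:ℝ) * (ζ + 1)) * v (t * q₂ ^ ((m:ℝ) / δ)) * (g (t * q₂ ^ ((m:ℝ) / δ)) * h (t * q₂ ^ ((m:ℝ) / δ)))) * ((β * (1 - q₁ ^ (1 / β)) * (1 - q₁) ^ (μ - 1)) * (∑' k : ℕ, qPoch q₁ (q₁ ^ μ) k / qPoch q₁ q₁ k * q₁ ^ ((k:ℝ) * (η + 1)) * u (t * q₁ ^ ((k:ℝ) / β)) * f (t * q₁ ^ ((k:ℝ) / β)))) +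 (δ * (1 - q₂ ^ (1 / δ)) * (1 - q₂) ^ (ν - 1)) * (∑' m : ℕ, qPoch q₂ (q₂ ^ ν) m / qPoch q₂ q₂ m * q₂ ^ ((m:ℝ) * (ζ + 1)) * v (t * q₂ ^ ((m:ℝ) / δ)) * (f (t * q₂ ^ ((m:ℝ) / δ)) * h (t * q₂ ^ ((m:ℝ) / δ)))) * ((β * (1 - q₁ ^ (1 / β)) * (1 - q₁) ^ (μ - 1)) * (∑' k : ℕ, qPoch q₁ (q₁ ^ μ) k / qPoch q₁ q₁ k * q₁ ^ ((k:ℝ) * (η + 1)) * u (t * q₁ ^ ((k:ℝ) / β)) * g (t * q₁ ^ ((k:ℝ) / β)))) + (δ * (1 - q₂ ^ (1 / δ)) * (1 - q₂) ^ (ν - 1)) * (∑' m : ℕ, qPoch q₂ (q₂ ^ ν) m / qPoch q₂ q₂ m * q₂ ^ ((m:ℝ) * (ζ + 1)) * v (t * q₂ ^ ((m:ℝ) / δ)) * f (t * q₂ ^ ((m:ℝ) / δ))) * ((β * (1 - q₁ ^ (1 / β)) * (1 - q₁) ^ (μ - 1)) * (∑' k : ℕ, qPoch q₁ (q₁ ^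 μ) k / qPoch q₁ q₁ k * q₁ ^ ((k:ℝ) * (η + 1)) * u (t * q₁ ^ ((k:ℝ) / β)) * (g (t * q₁ ^ ((k:ℝ) / β)) * h (t * q₁ ^ ((k:ℝ) / β))))) + (δ * (1 - q₂ ^ (1 / δ)) * (1 - q₂) ^ (ν - 1)) * (∑' m : ℕ, qPoch q₂ (q₂ ^ ν) m / qPoch q₂ q₂ m * q₂ ^ ((m:ℝ) * (ζ + 1)) * v (t * q₂ ^ ((m:ℝ) / δ)) * g (t * q₂ ^ ((m:ℝ) / δ))) * ((β * (1 - q₁ ^ (1 / β)) * (1 - q₁) ^ (μ - 1)) * (∑' k : ℕ, qPoch q₁ (q₁ ^ μ) k / qPoch q₁ q₁ k * q₁ ^ ((k:ℝ) * (η + 1)) * u (t * q₁ ^ ((k:ℝ) / β)) * (f (t * q₁ ^ ((k:ℝ) / β)) * h (t * q₁ ^ ((k:ℝ) / β))))) := by ring
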